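/- Let H be a real inner product space with dim H ≥ d+1, let v₁,…,v_{d+1} ∈ H and u ∈ H with u ≠ 0. Then |p_d sin₀(v₁,…,v_{d+1})| ≤ Σ_{i=1}^{d+1} |p_d sin₀(v₁,…,v_{i−1},u,v_{i+1},…,v_{d+1})|, i.e. the polar sine is a d-semimetric on H∖{0}. -/

import Mathlib

open scoped RealInnerProductSpace

/-- The `k`-dimensional content: the square root of the Gram determinant. -/
noncomputable def gramContent {H : Type*} [NormedAddCommGroup H] [InnerProductSpace ℝ H]
    {k : ℕ} (v : Fin k → H) : ℝ :=
  Real.sqrt (Matrix.det (Matrix.of fun i j => ⟪v i, v j⟫))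

/-- The polar sine at the origin (zero if some vector vanishes, since `x / 0 = 0`). -/
noncomputable def polarSin {H : Type*} [NormedAddCommGroup H] [InnerProductSpace ℝ H]
    {k : ℕ} (v : Fin k → H) : ℝ :=
  gramContent v / ∏ j, ‖v j‖

/-! Write `u = ∑ cⱼ • vⱼ + w` with `w ⟂ span vⱼ`. The Gram determinant is bilinear in the vector
placed in slot `i` and vanishes when that vector lies in the span `Vᵢ` of the other `vⱼ`, so Laplace
expansion gives `polarSin (update v i x) = polarSin (v without i) · ‖Pᵢ x‖ / ‖x‖`, where `Pᵢ` is the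
projection onto `Vᵢᗮ`. Since `Pᵢ u = cᵢ • Pᵢ vᵢ + w` with orthogonal summands and `‖Pᵢ vᵢ‖ ≤ ‖vᵢ‖`,
this yields `polarSin v · √(‖cᵢ • vᵢ‖² + ‖w‖²) ≤ ‖u‖ · polarSin (update v i u)`. Summing over `i`,
the triangle inequality in `ℝ²` bounds `∑ᵢ √(‖cᵢ • vᵢ‖² + ‖w‖²)` below by
`√(‖∑ cⱼ • vⱼ‖² + ‖w‖²) = ‖u‖`. -/

open Matrix Function Submodule Set

instance FiniteDimensional.span_range {K V ι : Type*} [DivisionRing K] [AddCommGroup V]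
    [Module K V] [Finite ι] (v : ι → V) : FiniteDimensional K (span K (range v)) :=
  FiniteDimensional.span_of_finite K (finite_range v)

lemma Real.sqrt_sq_sum_add_sq_sum_le {ι : Type*} (s : Finset ι) (a b : ι → ℝ) :
    √((∑ i ∈ s, a i) ^ 2 + (∑ i ∈ s, b i) ^ 2) ≤ ∑ i ∈ s, √(a i ^ 2 + b i ^ 2) := by
  simpa [Complex.norm_def, Complex.normSq_apply, Complex.re_sum, Complex.im_sum, sq] using
    norm_sum_le s fun i => (⟨a i, b i⟩ : ℂ)

lemma Real.div_mul_sqrt_le_sqrt {a b t r : ℝ} (ha : 0 ≤ a) (hab : a ≤ b) :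
    a / b * √((t * b) ^ 2 + r ^ 2) ≤ √((t * a) ^ 2 + r ^ 2) := by
  rcases (ha.trans hab).eq_or_lt with hb | hb
  · rw [← hb, div_zero, zero_mul]
    positivity
  have hsin : (a / b) ^ 2 ≤ 1 := by
    rw [div_pow, div_le_one (by positivity)]
    exact pow_le_pow_left₀ ha hab 2
  rw [← Real.sqrt_sq (div_nonneg ha hb.le), ← Real.sqrt_mul (sq_nonneg _)]
  apply Real.sqrt_le_sqrt
  calc (a / b) ^ 2 * ((t * b) ^ 2 + r ^ 2) = (t * a) ^ 2 + (a / b) ^ 2 * r ^ 2 := by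
        field_simp
    _ ≤ (t * a) ^ 2 + r ^ 2 := by
        gcongr
        exact mul_le_of_le_one_left (sq_nonneg r) hsin

section

variable {H : Type*} [NormedAddCommGroup H] [InnerProductSpace ℝ H]

lemma norm_sum_add_le_sum_sqrt {ι : Type*} [Fintype ι] [Nonempty ι] (x : ι → H) {w : H}
    (hw : ⟪∑ i, x i, w⟫ = 0) : ‖∑ i, x i + w‖ ≤ ∑ i, √(‖x i‖ ^ 2 + ‖w‖ ^ 2) := by
  have hw_le : ‖w‖ ≤ ∑ _i : ι, ‖w‖ := by
    rw [Finset.sum_const, Finset.card_univ, nsmul_eq_mul]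
    exact le_mul_of_one_le_left (norm_nonneg w) (Nat.one_le_cast.mpr Fintype.card_pos)
  calc ‖∑ i, x i + w‖ = √(‖∑ i, x i‖ ^ 2 + ‖w‖ ^ 2) := by
        simp only [sq, norm_add_eq_sqrt_iff_real_inner_eq_zero.mpr hw]
    _ ≤ √((∑ i, ‖x i‖) ^ 2 + (∑ _i : ι, ‖w‖) ^ 2) := by
        gcongr
        exact norm_sum_le _ _
    _ ≤ ∑ i, √(‖x i‖ ^ 2 + ‖w‖ ^ 2) := Real.sqrt_sq_sum_add_sq_sum_le _ _ _

lemma gramContent_eq_sqrt_det {k : ℕ} (v : Fin k → H) : gramContent v = √(gram ℝ v).det := rfl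

lemma polarSin_nonneg {k : ℕ} (v : Fin k → H) : 0 ≤ polarSin v :=
  div_nonneg (Real.sqrt_nonneg _) (Finset.prod_nonneg fun _ _ => norm_nonneg _)

section UpdateGram

variable {ι : Type*} [DecidableEq ι] (v : ι → H) (i : ι)

lemma of_inner_update_left (b : ι → H) (x : H) :
    of (fun p q => ⟪update v i x p, b q⟫) =
      (of fun p q => ⟪v p, b q⟫).updateRow i fun q => ⟪x, b q⟫ := by
  ext p q
  rcases eq_or_ne p i with rfl | hp <;> simp [*]

lemma of_inner_update_right (a : ι → H) (y : H) :
    of (fun p q => ⟪a p, update v i y q⟫) =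
      (of fun p q => ⟪a p, v q⟫).updateCol i fun p => ⟪a p, y⟫ := by
  ext p q
  rcases eq_or_ne q i with rfl | hq <;> simp [*]

variable [Fintype ι]

noncomputable def updateGramForm : H →ₗ[ℝ] H →ₗ[ℝ] ℝ :=
  LinearMap.mk₂ ℝ (fun x y => (of fun p q => ⟪update v i x p, update v i y q⟫).det)
    (fun x x' y => by
      simp only [of_inner_update_left, inner_add_left, ← Pi.add_def, det_updateRow_add])
    (fun a x y => by
      simp only [of_inner_update_left, real_inner_smul_left, ← smul_eq_mul, ← Pi.smul_def,
        det_updateRow_smul])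
    (fun x y y' => by
      simp only [of_inner_update_right, inner_add_right, ← Pi.add_def, det_updateCol_add])
    (fun a x y => by
      simp only [of_inner_update_right, real_inner_smul_right, ← smul_eq_mul, ← Pi.smul_def,
        det_updateCol_smul])

lemma updateGramForm_apply (x y : H) :
    updateGramForm v i x y = (of fun p q => ⟪update v i x p, update v i y q⟫).det := rfl

lemma updateGramForm_self (x : H) : updateGramForm v i x x = (gram ℝ (update v i x)).det := rfl

end UpdateGram

section Opposite

variable {n : ℕ} (v : Fin (n + 1) → H) (i : Fin (n + 1))

noncomputable def oppositeSpan : Submodule ℝ H := span ℝ (range (v ∘ i.succAbove))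

instance : FiniteDimensional ℝ (oppositeSpan v i) := FiniteDimensional.span_range _

lemma mem_oppositeSpan (t : Fin n) : v (i.succAbove t) ∈ oppositeSpan v i :=
  subset_span ⟨t, rfl⟩

lemma updateGramForm_eq_zero_of_mem_left {x : H} (hx : x ∈ oppositeSpan v i) :
    updateGramForm v i x = 0 := by
  suffices oppositeSpan v i ≤ LinearMap.ker (updateGramForm v i) from this hx
  rw [oppositeSpan, span_le]
  rintro _ ⟨t, rfl⟩
  ext y
  refine det_zero_of_row_eq (i.succAbove_ne t).symm ?_
  ext q
  simp [Fin.succAbove_ne]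

lemma updateGramForm_eq_zero_of_mem_right (x : H) {y : H} (hy : y ∈ oppositeSpan v i) :
    updateGramForm v i x y = 0 := by
  suffices oppositeSpan v i ≤ LinearMap.ker (updateGramForm v i).flip from
    LinearMap.congr_fun (this hy) x
  rw [oppositeSpan, span_le]
  rintro _ ⟨t, rfl⟩
  ext x
  refine det_zero_of_column_eq (i.succAbove_ne t).symm fun p => ?_
  simp [Fin.succAbove_ne]

lemma updateGramForm_of_mem_orthogonal {q : H} (hq : q ∈ (oppositeSpan v i)ᗮ) :
    updateGramForm v i q q = ‖q‖ ^ 2 * (gram ℝ (v ∘ i.succAbove)).det := by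
  rw [updateGramForm_apply, det_succ_row _ i, Fin.sum_univ_succAbove _ i]
  have hrow (t : Fin n) : ⟪q, v (i.succAbove t)⟫ = 0 :=
    inner_left_of_mem_orthogonal (mem_oppositeSpan v i t) hq
  have hminor : (of fun p r => ⟪update v i q p, update v i q r⟫).submatrix i.succAbove i.succAbove
      = gram ℝ (v ∘ i.succAbove) := by
    ext p r
    simp [Fin.succAbove_ne]
  simp [hrow, hminor]

theorem det_gram_update (x : H) :
    (gram ℝ (update v i x)).det =
      ‖(oppositeSpan v i)ᗮ.starProjection x‖ ^ 2 * (gram ℝ (v ∘ i.succAbove)).det := by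
  set K := oppositeSpan v i
  set a := K.starProjection x
  set b := Kᗮ.starProjection x
  have hx : a + b = x := K.starProjection_add_starProjection_orthogonal x
  have ha : a ∈ K := K.starProjection_apply_mem x
  calc (gram ℝ (update v i x)).det = updateGramForm v i (a + b) (a + b) := by
        rw [hx, updateGramForm_self]
    _ = updateGramForm v i b b := by
      simp [updateGramForm_eq_zero_of_mem_left v i ha, updateGramForm_eq_zero_of_mem_right v i b ha]
    _ = ‖b‖ ^ 2 * (gram ℝ (v ∘ i.succAbove)).det :=
      updateGramForm_of_mem_orthogonal v i (Kᗮ.starProjection_apply_mem x)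

theorem polarSin_update (x : H) :
    polarSin (update v i x) =
      polarSin (v ∘ i.succAbove) * (‖(oppositeSpan v i)ᗮ.starProjection x‖ / ‖x‖) := by
  rw [polarSin, polarSin, gramContent_eq_sqrt_det, det_gram_update, Fin.prod_univ_succAbove _ i,
    Real.sqrt_mul' _ (posSemidef_gram ℝ _).det_nonneg, Real.sqrt_sq (norm_nonneg _)]
  simp only [update_self, update_of_ne (Fin.succAbove_ne _ _)]
  rw [div_mul_div_comm, mul_comm (‖_‖), mul_comm (‖x‖)]
  rfl

theorem polarSin_eq_mul :
    polarSin v =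
      polarSin (v ∘ i.succAbove) * (‖(oppositeSpan v i)ᗮ.starProjection (v i)‖ / ‖v i‖) := by
  rw [← polarSin_update, update_eq_self]

theorem div_mul_sqrt_le_norm_starProjection (c : Fin (n + 1) → ℝ) {w : H}
    (hw : w ∈ (span ℝ (range v))ᗮ) :
    ‖(oppositeSpan v i)ᗮ.starProjection (v i)‖ / ‖v i‖ * √(‖c i • v i‖ ^ 2 + ‖w‖ ^ 2) ≤
      ‖(oppositeSpan v i)ᗮ.starProjection (∑ j, c j • v j + w)‖ := by
  set K := oppositeSpan v i
  set q := Kᗮ.starProjection (v i)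
  have hK : K ≤ span ℝ (range v) := span_mono (range_comp_subset_range _ _)
  have hq : q ∈ span ℝ (range v) := by
    simp only [q, starProjection_orthogonal_val]
    exact sub_mem (subset_span (mem_range_self i)) (hK (K.starProjection_apply_mem _))
  have hzero (t : Fin n) : Kᗮ.starProjection (v (i.succAbove t)) = 0 :=
    starProjection_orthogonal_apply_eq_zero (mem_oppositeSpan v i t)
  have hproj : Kᗮ.starProjection (∑ j, c j • v j + w) = c i • q + w := by
    rw [map_add, map_sum, Fin.sum_univ_succAbove _ i,
      starProjection_eq_self_iff.mpr (orthogonal_le hK hw)]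
    simp only [map_smul, hzero, smul_zero, Finset.sum_const_zero, add_zero, q]
  have hqw : ⟪c i • q, w⟫ = 0 := inner_right_of_mem_orthogonal (smul_mem _ _ hq) hw
  rw [hproj, norm_add_eq_sqrt_iff_real_inner_eq_zero.mpr hqw, norm_smul, norm_smul, ← sq, ← sq]
  exact Real.div_mul_sqrt_le_sqrt (norm_nonneg _) (Kᗮ.norm_starProjection_apply_le _)

end Opposite

end

theorem polarSin_simplex_inequality_general {H : Type*} [NormedAddCommGroup H]
    [InnerProductSpace ℝ H] {d : ℕ}
    (v : Fin (d + 1) → H) (u : H) (hu : u ≠ 0) :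
    polarSin v ≤ ∑ i, polarSin (Function.update v i u) := by
  obtain ⟨p, hp, w, hw, rfl⟩ := (span ℝ (range v)).exists_add_mem_mem_orthogonal u
  obtain ⟨c, rfl⟩ := (mem_span_range_iff_exists_fun ℝ).mp hp
  refine le_of_mul_le_mul_right ?_ (norm_pos_iff.mpr hu)
  calc polarSin v * ‖∑ j, c j • v j + w‖
      ≤ polarSin v * ∑ i, √(‖c i • v i‖ ^ 2 + ‖w‖ ^ 2) := by
        gcongr
        · exact polarSin_nonneg v
        · exact norm_sum_add_le_sum_sqrt _ (inner_right_of_mem_orthogonal hp hw)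
    _ = ∑ i, polarSin (v ∘ i.succAbove) * (‖(oppositeSpan v i)ᗮ.starProjection (v i)‖ / ‖v i‖ *
          √(‖c i • v i‖ ^ 2 + ‖w‖ ^ 2)) := by
        rw [Finset.mul_sum]
        exact Finset.sum_congr rfl fun i _ => by rw [polarSin_eq_mul v i, mul_assoc]
    _ ≤ ∑ i, polarSin (v ∘ i.succAbove) *
          ‖(oppositeSpan v i)ᗮ.starProjection (∑ j, c j • v j + w)‖ := by
        gcongr with i
        · exact polarSin_nonneg _
        · exact div_mul_sqrt_le_norm_starProjection v i c hw
    _ = (∑ i, polarSin (Function.update v i (∑ j, c j • v j + w))) * ‖∑ j, c j • v j + w‖ := by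
        rw [Finset.sum_mul]
        refine Finset.sum_congr rfl fun i _ => ?_
        rw [polarSin_update, mul_assoc, div_mul_cancel₀ _ (norm_ne_zero_iff.mpr hu)]

theorem polarSin_simplex_inequality {H : Type*} [NormedAddCommGroup H]
    [InnerProductSpace ℝ H] {d : ℕ}
    (hdim : (d + 1 : Cardinal) ≤ Module.rank ℝ H)
    (v : Fin (d + 1) → H) (u : H) (hu : u ≠ 0) :
    polarSin v ≤ ∑ i, polarSin (Function.update v i u) :=
  polarSin_simplex_inequality_general v u hu
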